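/- arXiv:2407.10565 — 4 statements merged into one kernel-verified Lean document; each statement's English description precedes it below -/
import Mathlib

section
/- Let ℓ ≥ 1 and let A₁, A₂ be disjoint finite sets with |A₁| = |A₂| = ℓ, and let E ⊆ A₁ × A₂ be a set of pairs (the edge set of a bipartite graph F between A₁ and A₂). Then the number of bijections σ : A₁ → A₂ satisfying (a, σ(a)) ∉ E for every a ∈ A₁ is at most e^{−|E|/(2ℓ)} · ℓ!. Equivalently, a uniformly random perfect matching M between A₁ and A₂ avoids all edges of F with probability at most e^{−e(F)/(2ℓ)}. -/
open Finset

set_option linter.unusedSectionVars false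

def nav {α β : Type} [Fintype α] [Fintype β] [DecidableEq α] [DecidableEq β]
    (E : Finset (α × β)) : ℕ :=
  (Finset.univ.filter (fun σ : α ≃ β => ∀ a : α, (a, σ a) ∉ E)).card

variable {α β α' β' : Type} [Fintype α] [Fintype β] [DecidableEq α] [DecidableEq β]
  [Fintype α'] [Fintype β'] [DecidableEq α'] [DecidableEq β']

lemma mem_image_prodMap (E : Finset (α × β)) (f : α ≃ α') (g : β ≃ β') (x : α') (y : β') :
    (x, y) ∈ E.image (Prod.map ⇑f ⇑g) ↔ (f.symm x, g.symm y) ∈ E := by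
  simp only [Finset.mem_image, Prod.exists, Prod.map_apply, Prod.mk.injEq]
  constructor
  · rintro ⟨a, b, hab, ha, hb⟩
    simpa [← ha, ← hb] using hab
  · intro h
    exact ⟨f.symm x, g.symm y, h, by simp, by simp⟩

lemma mem_image_swap (E : Finset (α × β)) (y : β) (x : α) :
    (y, x) ∈ E.image Prod.swap ↔ (x, y) ∈ E := by
  simp only [Finset.mem_image, Prod.exists]
  constructor
  · rintro ⟨a, b, hab, h⟩
    obtain ⟨h1, h2⟩ := Prod.mk.injEq _ _ _ _ ▸ h
    simp only [Prod.swap_prod_mk, Prod.mk.injEq] at h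
    rw [← h.1, ← h.2]; exact hab
  · intro h; exact ⟨x, y, h, rfl⟩

lemma nav_image (E : Finset (α × β)) (f : α ≃ α') (g : β ≃ β') :
    nav (E.image (Prod.map ⇑f ⇑g)) = nav E := by
  unfold nav
  apply Finset.card_bij' (i := fun σ _ => (f.trans σ).trans g.symm)
    (j := fun τ _ => (f.symm.trans τ).trans g)
  · intro σ hσ
    simp only [Finset.mem_filter, Finset.mem_univ, true_and] at hσ ⊢
    intro a h
    exact hσ (f a) (by rw [mem_image_prodMap]; simpa using h)
  · intro τ hτ
    simp only [Finset.mem_filter, Finset.mem_univ, true_and] at hτ ⊢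
    intro a h
    rw [mem_image_prodMap] at h
    simp only [Equiv.symm_apply_apply, Equiv.trans_apply, Equiv.symm_symm] at h ⊢
    exact hτ _ (by simpa using h)
  · intro σ _; ext x; simp
  · intro τ _; ext x; simp

lemma nav_swap (E : Finset (α × β)) :
    nav (E.image Prod.swap) = nav E := by
  unfold nav
  apply Finset.card_bij' (i := fun σ _ => σ.symm) (j := fun τ _ => τ.symm)
  case hi =>
    intro σ hσ
    simp only [Finset.mem_filter, Finset.mem_univ, true_and] at hσ ⊢
    intro a h
    have := hσ (σ.symm a)
    rw [show σ (σ.symm a) = a from σ.apply_symm_apply a, mem_image_swap] at this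
    exact this h
  case hj =>
    intro τ hτ
    simp only [Finset.mem_filter, Finset.mem_univ, true_and] at hτ ⊢
    intro b h
    rw [mem_image_swap] at h
    exact hτ (τ.symm b) (by simpa using h)
  case left_inv => intro σ _; simp
  case right_inv => intro τ _; simp

def rdeg (E : Finset (α × β)) (x : α) : ℕ := (E.filter fun q => q.1 = x).card
def cdeg (E : Finset (α × β)) (y : β) : ℕ := (E.filter fun q => q.2 = y).card

lemma rdeg_image (E : Finset (α × β)) (f : α ≃ α') (g : β ≃ β') (x : α') :
    rdeg (E.image (Prod.map ⇑f ⇑g)) x = rdeg E (f.symm x) := by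
  unfold rdeg
  apply Finset.card_bij' (i := fun q _ => Prod.map ⇑f.symm ⇑g.symm q)
    (j := fun q _ => Prod.map ⇑f ⇑g q)
  case hi =>
    rintro ⟨a, b⟩ h
    simp only [Finset.mem_filter] at h ⊢
    rw [mem_image_prodMap] at h
    exact ⟨h.1, by simp [h.2]⟩
  case hj =>
    rintro ⟨a, b⟩ h
    simp only [Finset.mem_filter] at h ⊢
    rw [mem_image_prodMap]
    exact ⟨by simpa using h.1, by simp [h.2]⟩
  case left_inv => rintro ⟨a, b⟩ _; simp
  case right_inv => rintro ⟨a, b⟩ _; simp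

lemma cdeg_image (E : Finset (α × β)) (f : α ≃ α') (g : β ≃ β') (y : β') :
    cdeg (E.image (Prod.map ⇑f ⇑g)) y = cdeg E (g.symm y) := by
  unfold cdeg
  apply Finset.card_bij' (i := fun q _ => Prod.map ⇑f.symm ⇑g.symm q)
    (j := fun q _ => Prod.map ⇑f ⇑g q)
  case hi =>
    rintro ⟨a, b⟩ h
    simp only [Finset.mem_filter] at h ⊢
    rw [mem_image_prodMap] at h
    exact ⟨h.1, by simp [h.2]⟩
  case hj =>
    rintro ⟨a, b⟩ h
    simp only [Finset.mem_filter] at h ⊢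
    rw [mem_image_prodMap]
    exact ⟨by simpa using h.1, by simp [h.2]⟩
  case left_inv => rintro ⟨a, b⟩ _; simp
  case right_inv => rintro ⟨a, b⟩ _; simp

lemma rdeg_swap (E : Finset (α × β)) (y : β) :
    rdeg (E.image Prod.swap) y = cdeg E y := by
  unfold rdeg cdeg
  apply Finset.card_bij' (i := fun q _ => q.swap) (j := fun q _ => q.swap)
  case hi =>
    rintro ⟨b, a⟩ h
    simp only [Finset.mem_filter] at h ⊢
    rw [mem_image_swap] at h
    exact ⟨h.1, h.2⟩
  case hj =>
    rintro ⟨a, b⟩ h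
    simp only [Finset.mem_filter] at h ⊢
    rw [mem_image_swap]
    exact ⟨h.1, h.2⟩
  case left_inv => rintro ⟨a, b⟩ _; simp
  case right_inv => rintro ⟨a, b⟩ _; simp

lemma cdeg_swap (E : Finset (α × β)) (x : α) :
    cdeg (E.image Prod.swap) x = rdeg E x := by
  unfold rdeg cdeg
  apply Finset.card_bij' (i := fun q _ => q.swap) (j := fun q _ => q.swap)
  case hi =>
    rintro ⟨b, a⟩ h
    simp only [Finset.mem_filter] at h ⊢
    rw [mem_image_swap] at h
    exact ⟨h.1, h.2⟩
  case hj =>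
    rintro ⟨a, b⟩ h
    simp only [Finset.mem_filter] at h ⊢
    rw [mem_image_swap]
    exact ⟨h.1, h.2⟩
  case left_inv => rintro ⟨a, b⟩ _; simp
  case right_inv => rintro ⟨a, b⟩ _; simp

def Ep {n : ℕ} (E : Finset (Fin (n+1) × Fin (n+1))) (p : Fin (n+1)) :
    Finset (Fin n × Fin n) :=
  Finset.univ.filter (fun ij : Fin n × Fin n => (ij.1.succ, Equiv.swap 0 p ij.2.succ) ∈ E)

lemma nav_succ {n : ℕ} (E : Finset (Fin (n+1) × Fin (n+1))) :
    nav E = ∑ p ∈ Finset.univ.filter (fun p => (0, p) ∉ E), nav (Ep E p) := by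
  have step1 : nav E = (Finset.univ.filter
      (fun x : Fin (n+1) × Equiv.Perm (Fin n) =>
        ∀ a : Fin (n+1), (a, Equiv.Perm.decomposeFin.symm x a) ∉ E)).card := by
    unfold nav
    apply Finset.card_bij' (i := fun σ _ => Equiv.Perm.decomposeFin σ)
      (j := fun x _ => Equiv.Perm.decomposeFin.symm x)
    case hi =>
      intro σ hσ
      simp only [Finset.mem_filter, Finset.mem_univ, true_and, Equiv.symm_apply_apply] at hσ ⊢
      exact hσ
    case hj =>
      intro x hx
      simp only [Finset.mem_filter, Finset.mem_univ, true_and] at hx ⊢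
      exact hx
    case left_inv => intro σ _; simp
    case right_inv => intro x _; simp
  rw [step1, Finset.card_filter, Fintype.sum_prod_type]
  rw [Finset.sum_filter]
  apply Finset.sum_congr rfl
  intro p _
  by_cases h : (0, p) ∈ E
  · rw [if_neg (by simpa using h)]
    apply Finset.sum_eq_zero
    intro e _
    rw [if_neg]
    intro hall
    exact (hall 0) (by simpa using h)
  · rw [if_pos h, ← Finset.card_filter]
    have hiff : ∀ e : Equiv.Perm (Fin n),
        (∀ a : Fin (n+1), (a, Equiv.Perm.decomposeFin.symm (p, e) a) ∉ E)
          ↔ ∀ i : Fin n, (i, e i) ∉ Ep E p := by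
      intro e
      rw [Fin.forall_fin_succ]
      simp only [Equiv.Perm.decomposeFin_symm_apply_zero,
        Equiv.Perm.decomposeFin_symm_apply_succ, Ep, Finset.mem_filter, Finset.mem_univ,
        true_and, h, not_false_iff, true_iff]
    unfold nav
    apply Finset.card_bij' (i := fun e _ => e) (j := fun e _ => e)
    case neg.hi =>
      intro e he
      simp only [Finset.mem_filter, Finset.mem_univ, true_and] at he ⊢
      exact (hiff e).1 he
    case neg.hj =>
      intro e he
      simp only [Finset.mem_filter, Finset.mem_univ, true_and] at he ⊢
      exact (hiff e).2 he
    case neg.left_inv => intro e _; rfl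
    case neg.right_inv => intro e _; rfl

lemma card_Ep {n : ℕ} (E : Finset (Fin (n+1) × Fin (n+1))) (p : Fin (n+1)) :
    E.card ≤ (Ep E p).card + rdeg E 0 + cdeg E p := by
  have hsub : E ⊆ ((Ep E p).image
      (fun ij : Fin n × Fin n => (ij.1.succ, Equiv.swap 0 p ij.2.succ)))
      ∪ E.filter (fun q => q.1 = 0) ∪ E.filter (fun q => q.2 = p) := by
    intro q hq
    by_cases h1 : q.1 = 0
    · exact Finset.mem_union_left _ (Finset.mem_union_right _ (Finset.mem_filter.2 ⟨hq, h1⟩))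
    by_cases h2 : q.2 = p
    · exact Finset.mem_union_right _ (Finset.mem_filter.2 ⟨hq, h2⟩)
    · apply Finset.mem_union_left
      apply Finset.mem_union_left
      apply Finset.mem_image.2
      have h0 : Equiv.swap 0 p q.2 ≠ 0 := by
        intro hc
        rw [Equiv.swap_apply_eq_iff, Equiv.swap_apply_left] at hc
        exact h2 hc
      refine ⟨(q.1.pred h1, (Equiv.swap 0 p q.2).pred h0), ?_, ?_⟩
      · rw [Ep, Finset.mem_filter]
        refine ⟨Finset.mem_univ _, ?_⟩
        simp only [Fin.succ_pred, Equiv.swap_apply_self]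
        exact hq
      · simp only [Fin.succ_pred, Equiv.swap_apply_self]
  calc E.card ≤ _ := Finset.card_le_card hsub
    _ ≤ _ := Finset.card_union_le _ _
    _ ≤ ((Ep E p).image _).card + (E.filter (fun q => q.1 = 0)).card
          + (E.filter (fun q => q.2 = p)).card := by
        gcongr; exact Finset.card_union_le _ _
    _ ≤ (Ep E p).card + rdeg E 0 + cdeg E p := by
        unfold rdeg cdeg; gcongr; exact Finset.card_image_le

lemma card_S {n : ℕ} (E : Finset (Fin (n+1) × Fin (n+1))) :
    (Finset.univ.filter fun p => (0, p) ∉ E).card + rdeg E 0 = n+1 := by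
  have h1 : rdeg E 0 = (Finset.univ.filter fun p : Fin (n+1) => (0, p) ∈ E).card := by
    unfold rdeg
    apply Finset.card_bij' (i := fun q _ => q.2) (j := fun p _ => (0, p))
    case hi =>
      rintro ⟨a, b⟩ h
      simp only [Finset.mem_filter, Finset.mem_univ, true_and] at h ⊢
      rw [show a = 0 from h.2] at h
      exact h.1
    case hj =>
      intro p h
      simp only [Finset.mem_filter, Finset.mem_univ, true_and] at h ⊢
      exact ⟨h, trivial⟩
    case left_inv =>
      rintro ⟨a, b⟩ h
      simp only [Finset.mem_filter] at h
      simp [h.2]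
    case right_inv => intro p _; rfl
  rw [h1, add_comm]
  rw [Finset.card_filter_add_card_filter_not]
  exact Finset.card_univ.trans (by simp)

lemma nav_le {n : ℕ} (E : Finset (Fin n × Fin n)) : nav E ≤ n.factorial := by
  unfold nav
  calc _ ≤ Finset.univ.card := Finset.card_le_card (fun σ _ => Finset.mem_univ σ)
    _ = Fintype.card (Fin n ≃ Fin n) := Finset.card_univ
    _ = n.factorial := by rw [Fintype.card_equiv (Equiv.refl _)]; simp

lemma card_eq_sum_cdeg {n : ℕ} (E : Finset (Fin n × Fin n)) :
    E.card = ∑ p : Fin n, cdeg E p := by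
  unfold cdeg
  exact Finset.card_eq_sum_card_fiberwise (fun q _ => Finset.mem_univ q.2)

lemma key_aux {n : ℕ}
    (IH : ∀ E : Finset (Fin n × Fin n),
      (nav E : ℝ) ≤ Real.exp (-(E.card : ℝ) / (2 * n)) * (n.factorial : ℝ))
    (E : Finset (Fin (n+1) × Fin (n+1)))
    (hcol : ∀ p, cdeg E p ≤ rdeg E 0) :
    (nav E : ℝ) ≤ Real.exp (-(E.card : ℝ) / (2 * (n+1))) * ((n+1).factorial : ℝ) := by
  set d := rdeg E 0 with hd
  set m := E.card with hm
  set S := Finset.univ.filter (fun p : Fin (n+1) => (0, p) ∉ E) with hS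
  have hSd : S.card + d = n + 1 := card_S E
  have hdle : d ≤ n + 1 := by omega
  have hScast : (S.card : ℝ) = (n+1 : ℝ) - d := by
    have : (S.card : ℝ) + d = ((n:ℝ) + 1) := by exact_mod_cast congrArg (Nat.cast (R := ℝ)) hSd
    linarith
  have hsplit : (nav E : ℝ) = ∑ p ∈ S, (nav (Ep E p) : ℝ) := by
    rw [nav_succ E]; push_cast; rfl
  have hfact : ((n+1).factorial : ℝ) = ((n:ℝ)+1) * n.factorial := by
    rw [Nat.factorial_succ]; push_cast; ring
  have hnfpos : (0:ℝ) < n.factorial := by positivity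
  have hs_le : (S.card : ℝ) ≤ ((n:ℝ)+1) * Real.exp (-(d:ℝ)/((n:ℝ)+1)) := by
    rw [hScast]
    have h1 : -(d:ℝ)/((n:ℝ)+1) + 1 ≤ Real.exp (-(d:ℝ)/((n:ℝ)+1)) := Real.add_one_le_exp _
    have h2 : (0:ℝ) < (n:ℝ)+1 := by positivity
    calc ((n:ℝ)+1) - d = ((n:ℝ)+1) * (-(d:ℝ)/((n:ℝ)+1) + 1) := by field_simp; ring
      _ ≤ ((n:ℝ)+1) * Real.exp (-(d:ℝ)/((n:ℝ)+1)) := by gcongr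
  by_cases hcase : (m:ℝ) ≤ 2 * d
  · -- Case A
    have h1 : (nav E : ℝ) ≤ ∑ p ∈ S, (n.factorial : ℝ) := by
      rw [hsplit]
      apply Finset.sum_le_sum
      intro p _
      exact_mod_cast nav_le (Ep E p)
    have h2 : Real.exp (-(d:ℝ)/((n:ℝ)+1)) ≤ Real.exp (-(m:ℝ)/(2*((n:ℝ)+1))) := by
      apply Real.exp_le_exp.2
      rw [div_le_div_iff₀ (by positivity) (by positivity)]
      nlinarith
    calc (nav E : ℝ) ≤ ∑ p ∈ S, (n.factorial : ℝ) := h1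
      _ = S.card * n.factorial := by rw [Finset.sum_const]; push_cast; ring
      _ ≤ (((n:ℝ)+1) * Real.exp (-(d:ℝ)/((n:ℝ)+1))) * n.factorial := by gcongr
      _ ≤ (((n:ℝ)+1) * Real.exp (-(m:ℝ)/(2*((n:ℝ)+1)))) * n.factorial := by gcongr
      _ = Real.exp (-(m:ℝ) / (2 * ((n:ℝ)+1))) * ((n+1).factorial : ℝ) := by
          rw [hfact]; ring
  · -- Case B
    push_neg at hcase
    have hmd : m ≤ (n+1) * d := by
      have : m = ∑ p : Fin (n+1), cdeg E p := card_eq_sum_cdeg E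
      calc m = ∑ p : Fin (n+1), cdeg E p := this
        _ ≤ ∑ _p : Fin (n+1), d := Finset.sum_le_sum (fun p _ => hcol p)
        _ = (n+1) * d := by rw [Finset.sum_const]; simp [mul_comm]
    have hn1 : 1 ≤ n := by
      have hc : 2*d < m := by exact_mod_cast hcase
      by_contra hn
      have h0 : n = 0 := by omega
      rw [h0] at hmd
      omega
    have hNpos : (0:ℝ) < n := by exact_mod_cast Nat.pos_of_ne_zero (by omega)
    have hstep : ∀ p ∈ S, (nav (Ep E p) : ℝ)
        ≤ Real.exp (-((m:ℝ) - 2*d)/(2*(n:ℝ))) * n.factorial := by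
      intro p _
      have h1 := IH (Ep E p)
      have h2 : (m:ℝ) ≤ (Ep E p).card + d + cdeg E p := by
        exact_mod_cast card_Ep E p
      have h3 : (cdeg E p : ℝ) ≤ d := by exact_mod_cast hcol p
      calc (nav (Ep E p) : ℝ) ≤ Real.exp (-((Ep E p).card : ℝ)/(2*(n:ℝ))) * n.factorial := h1
        _ ≤ Real.exp (-((m:ℝ) - 2*d)/(2*(n:ℝ))) * n.factorial := by
            gcongr
            linarith
    have harith : -(d:ℝ)/((n:ℝ)+1) + (-((m:ℝ) - 2*d)/(2*(n:ℝ)))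
        ≤ -(m:ℝ)/(2*((n:ℝ)+1)) := by
      rw [div_add_div _ _ (by positivity) (by positivity : (2*(n:ℝ)) ≠ 0),
        div_le_div_iff₀ (by positivity) (by positivity)]
      nlinarith
    calc (nav E : ℝ) = ∑ p ∈ S, (nav (Ep E p) : ℝ) := hsplit
      _ ≤ ∑ p ∈ S, Real.exp (-((m:ℝ) - 2*d)/(2*(n:ℝ))) * n.factorial :=
          Finset.sum_le_sum hstep
      _ = S.card * (Real.exp (-((m:ℝ) - 2*d)/(2*(n:ℝ))) * n.factorial) := by
          rw [Finset.sum_const]; push_cast; ring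
      _ ≤ (((n:ℝ)+1) * Real.exp (-(d:ℝ)/((n:ℝ)+1)))
            * (Real.exp (-((m:ℝ) - 2*d)/(2*(n:ℝ))) * n.factorial) := by
          gcongr
      _ = (Real.exp (-(d:ℝ)/((n:ℝ)+1) + (-((m:ℝ) - 2*d)/(2*(n:ℝ)))))
            * (((n:ℝ)+1) * n.factorial) := by
          rw [Real.exp_add]; ring
      _ ≤ Real.exp (-(m:ℝ)/(2*((n:ℝ)+1))) * (((n:ℝ)+1) * n.factorial) :=
          mul_le_mul_of_nonneg_right (Real.exp_le_exp.2 harith) (by positivity)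
      _ = Real.exp (-(m:ℝ) / (2 * ((n:ℝ)+1))) * ((n+1).factorial : ℝ) := by
          rw [hfact]

lemma card_image_prodMap {n : ℕ} (E : Finset (Fin n × Fin n)) (f g : Fin n ≃ Fin n) :
    (E.image (Prod.map ⇑f ⇑g)).card = E.card := by
  apply Finset.card_image_of_injective
  exact Function.Injective.prodMap f.injective g.injective

lemma relabel_max {n : ℕ} (E : Finset (Fin (n+1) × Fin (n+1))) (r : Fin (n+1))
    (hr : ∀ p, cdeg E p ≤ rdeg E r) :
    ∃ E' : Finset (Fin (n+1) × Fin (n+1)),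
      nav E' = nav E ∧ E'.card = E.card ∧ ∀ p, cdeg E' p ≤ rdeg E' 0 := by
  refine ⟨E.image (Prod.map ⇑(Equiv.swap 0 r) ⇑(Equiv.refl (Fin (n+1)))), ?_, ?_, ?_⟩
  · exact nav_image E _ _
  · exact card_image_prodMap E _ _
  · intro p
    rw [cdeg_image, rdeg_image]
    simp only [Equiv.refl_symm, Equiv.refl_apply, Equiv.symm_swap, Equiv.swap_apply_left]
    exact hr p

lemma key : ∀ (n : ℕ) (E : Finset (Fin n × Fin n)),
    (nav E : ℝ) ≤ Real.exp (-(E.card : ℝ) / (2 * n)) * (n.factorial : ℝ) := by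
  intro n
  induction n with
  | zero =>
    intro E
    have hE : E = ∅ := Finset.eq_empty_of_forall_notMem (fun q hq => q.1.elim0)
    subst hE
    have h1 : (nav (∅ : Finset (Fin 0 × Fin 0)) : ℝ) ≤ 1 := by
      exact_mod_cast nav_le (∅ : Finset (Fin 0 × Fin 0))
    simpa using h1
  | succ n ih =>
    intro E
    obtain ⟨v, -, hv⟩ := Finset.exists_max_image (Finset.univ : Finset (Fin (n+1) ⊕ Fin (n+1)))
      (Sum.elim (rdeg E) (cdeg E)) ⟨Sum.inl 0, Finset.mem_univ _⟩
    cases v with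
    | inl r =>
      have hr : ∀ p, cdeg E p ≤ rdeg E r := fun p => hv (Sum.inr p) (Finset.mem_univ _)
      obtain ⟨E', h1, h2, h3⟩ := relabel_max E r hr
      rw [← h1, ← h2]
      exact le_trans (key_aux ih E' h3) (by push_cast; exact le_refl _)
    | inr c =>
      set E2 := E.image Prod.swap with hE2
      have hr : ∀ p, cdeg E2 p ≤ rdeg E2 c := by
        intro p
        rw [cdeg_swap, rdeg_swap]
        exact hv (Sum.inl p) (Finset.mem_univ _)
      obtain ⟨E', h1, h2, h3⟩ := relabel_max E2 c hr
      have h4 : nav E2 = nav E := nav_swap E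
      have h5 : E2.card = E.card := Finset.card_image_of_injective E Prod.swap_injective
      rw [← h4, ← h1, ← h5, ← h2]
      exact le_trans (key_aux ih E' h3) (by push_cast; exact le_refl _)





/-- A uniformly random perfect matching (bijection) between two disjoint `ℓ`-sets avoids
all edges of a fixed bipartite graph `E` with probability at most `e^{-|E|/(2ℓ)}`:
the number of bijections `σ` with `(a, σ a) ∉ E` for all `a` is at most
`e^{-|E|/(2ℓ)} ⬝ ℓ!`. -/
theorem stmt7 (ℓ : ℕ) (hℓ : 1 ≤ ℓ) (α β : Type) [Fintype α] [Fintype β]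
    [DecidableEq α] [DecidableEq β]
    (hα : Fintype.card α = ℓ) (hβ : Fintype.card β = ℓ) (E : Finset (α × β)) :
    ((Finset.univ.filter (fun σ : α ≃ β => ∀ a : α, (a, σ a) ∉ E)).card : ℝ)
      ≤ Real.exp (-(E.card : ℝ) / (2 * ℓ)) * (Nat.factorial ℓ : ℝ) := by
  have eα : α ≃ Fin ℓ := Fintype.equivFinOfCardEq hα
  have eβ : β ≃ Fin ℓ := Fintype.equivFinOfCardEq hβ
  set E' := E.image (Prod.map ⇑eα ⇑eβ) with hE'
  have h1 : nav E' = nav E := nav_image E eα eβ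
  have h2 : E'.card = E.card :=
    Finset.card_image_of_injective E (Function.Injective.prodMap eα.injective eβ.injective)
  have h := key ℓ E'
  rw [h1, h2] at h
  exact h
end

section
/- Let 0 < β ≤ 1/2, 0 < γ ≤ 1/2, and let ℓ, n be integers with 2 ≤ ℓ ≤ β²γ²·n. Fix a partial transversal U of the ℓ-lift vertex set with |U| ≥ 2β·√(nℓ), and fix a subset V of vertices with |V| ≥ 5γ·nℓ. Then for a uniformly random ℓ-lift G of K_n, the probability that |N(U) ∩ V| < γ·nℓ is at most e^{−γ³·n·|U|/4}. -/
/-- The `ℓ`-lift of the complete graph `K_n` determined by a family of permutations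
`σ` (only the values `σ i j` for `i < j` matter): vertices `(i,a)` and `(j, σ i j a)`
are adjacent for `i < j`. -/
def liftGraph (n ℓ : ℕ) (σ : Fin n → Fin n → Equiv.Perm (Fin ℓ)) :
    SimpleGraph (Fin n × Fin ℓ) :=
  SimpleGraph.fromRel (fun x y => x.1 < y.1 ∧ σ x.1 y.1 x.2 = y.2)

/-- The proportion of `ℓ`-lifts of `K_n` (all chosen uniformly at random) whose lift
graph satisfies the property `p`. -/
noncomputable def liftProb (n ℓ : ℕ) (p : SimpleGraph (Fin n × Fin ℓ) → Prop) : ℝ :=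
  ((@Finset.filter _ (fun σ : Fin n → Fin n → Equiv.Perm (Fin ℓ) => p (liftGraph n ℓ σ))
      (Classical.decPred _) Finset.univ).card : ℝ)
    / (Fintype.card (Fin n → Fin n → Equiv.Perm (Fin ℓ)) : ℝ)

/-- `N(U)`: the set of vertices that are in `U` or have a neighbor in `U`. -/
def nbhdSet {V : Type*} (G : SimpleGraph V) (U : Set V) : Set V :=
  {v | v ∈ U ∨ ∃ u ∈ U, G.Adj u v}

/-!
Pick a sub-transversal `S ⊆ U` of size `K = min(|U|, ⌈2γn⌉)` and let `I` be the set of fibres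
it meets. If `|N(U) ∩ V| < γnℓ`, then `N(S)` misses some `T ⊆ V` of size `⌊4γnℓ⌋`. For a fixed
`T`, missing it is an intersection of independent events, one for each pair of fibres `i < j`:
when exactly one of `i, j` lies in `I`, the point of `S` in that fibre must be sent outside the
slice of `T` in the other fibre, which a uniform permutation does with probability
`1 - t/ℓ ≤ e^{-t/ℓ}`. Each fibre outside `I` is paired with all `K` fibres of `I`, so the
exponents add up to `K · |T \ (I × [ℓ])| / ℓ ≥ K (|T| - Kℓ) / ℓ`. A union bound over the at
most `2^{nℓ}` sets `T` finishes the proof: by the choice of `K`,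
`Kℓ` is only about half of `|T|`.
-/

open Finset
open scoped Nat

section Perm

variable {α : Type*} [Fintype α] [DecidableEq α]

lemma card_filter_perm_apply_eq (a b : α) :
    #{π : Equiv.Perm α | π a = b} = (Fintype.card α - 1)! := by
  have hfiber (c : α) : #{π : Equiv.Perm α | π a = c} = #{π : Equiv.Perm α | π a = b} :=
    card_equiv (Equiv.mulLeft (Equiv.swap c b)) fun π => by
      simp [Equiv.swap_apply_eq_iff]
  have hsum := card_eq_sum_card_fiberwise (s := univ) (t := univ)
    (f := fun π : Equiv.Perm α => π a) (by simp)
  simp only [hfiber, sum_const, Finset.card_univ, Fintype.card_perm,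
    smul_eq_mul] at hsum
  have hpos : 0 < Fintype.card α := Fintype.card_pos_iff.mpr ⟨a⟩
  rw [← Nat.mul_factorial_pred hpos.ne'] at hsum
  exact (Nat.eq_of_mul_eq_mul_left hpos hsum).symm

lemma card_filter_perm_apply_notMem (a : α) (s : Finset α) :
    #{π : Equiv.Perm α | π a ∉ s} = #sᶜ * (Fintype.card α - 1)! := by
  rw [card_eq_sum_card_fiberwise (f := fun π : Equiv.Perm α => π a) (t := sᶜ)
    (fun π hπ => by simpa using hπ)]
  rw [sum_congr rfl fun c hc => ?_, sum_const, smul_eq_mul]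
  rw [filter_filter, ← card_filter_perm_apply_eq a c]
  congr 1
  ext π
  simp_all

lemma card_filter_perm_apply_notMem_le (a : α) (s : Finset α) :
    (#{π : Equiv.Perm α | π a ∉ s} : ℝ)
      ≤ Real.exp (-#s / Fintype.card α) * (Fintype.card α)! := by
  have hpos : 0 < Fintype.card α := Fintype.card_pos_iff.mpr ⟨a⟩
  have hfact : ((Fintype.card α)! : ℝ) = Fintype.card α * (Fintype.card α - 1)! := by
    exact_mod_cast (Nat.mul_factorial_pred hpos.ne').symm
  rw [card_filter_perm_apply_notMem, card_compl, Nat.cast_mul, Nat.cast_sub (card_le_univ s),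
    hfact]
  have hcard : (0 : ℝ) < Fintype.card α := by exact_mod_cast hpos
  calc ((Fintype.card α : ℝ) - #s) * (Fintype.card α - 1)!
      = (-#s / Fintype.card α + 1) * (Fintype.card α * (Fintype.card α - 1)!) := by
        field_simp; ring
    _ ≤ _ := by gcongr; exact Real.add_one_le_exp _

lemma card_filter_perm_inv_apply_notMem_le (b : α) (s : Finset α) :
    (#{π : Equiv.Perm α | π⁻¹ b ∉ s} : ℝ)
      ≤ Real.exp (-#s / Fintype.card α) * (Fintype.card α)! := by
  rw [card_equiv (Equiv.inv (Equiv.Perm α)) (t := {π : Equiv.Perm α | π b ∉ s}) (by simp)]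
  exact card_filter_perm_apply_notMem_le b s

end Perm

lemma card_piFinset_le_exp_mul {ι β : Type*} [Fintype ι] [DecidableEq ι] [Fintype β]
    (A : ι → Finset β) (c : ι → ℝ) (h : ∀ i, (#(A i) : ℝ) ≤ Real.exp (-c i) * Fintype.card β) :
    (#(Fintype.piFinset A) : ℝ) ≤ Real.exp (-∑ i, c i) * Fintype.card (ι → β) := by
  rw [Fintype.card_piFinset, Fintype.card_pi, Nat.cast_prod, Nat.cast_prod, ← sum_neg_distrib,
    Real.exp_sum, ← prod_mul_distrib]
  exact prod_le_prod (fun i _ => by positivity) fun i _ => h i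

lemma sum_sum_ite_lt_add_swap {ι M : Type*} [Fintype ι] [LinearOrder ι] [AddCommMonoid M]
    (w : ι → ι → M) (hw : ∀ i, w i i = 0) :
    ∑ i, ∑ j, (if i < j then w i j + w j i else 0) = ∑ i, ∑ j, w i j := by
  calc ∑ i, ∑ j, (if i < j then w i j + w j i else 0)
      = ∑ i, ∑ j, (if i < j then w i j else 0) + ∑ i, ∑ j, (if i < j then w j i else 0) := by
        simp only [ite_add_zero, sum_add_distrib]
    _ = ∑ i, ∑ j, (if i < j then w i j else 0) + ∑ i, ∑ j, (if j < i then w i j else 0) := by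
        rw [sum_comm (f := fun i j => if i < j then w j i else 0)]
    _ = ∑ i, ∑ j, w i j := by
        simp only [← sum_add_distrib]
        refine sum_congr rfl fun i _ => sum_congr rfl fun j _ => ?_
        rcases lt_trichotomy i j with h | rfl | h
        · simp [h, h.not_gt]
        · simp [hw]
        · simp [h, h.not_gt]

lemma card_le_card_filter_fst_notMem_add {α β : Type*} [DecidableEq α] [Fintype β]
    (I : Finset α) (T : Finset (α × β)) : #T ≤ #{x ∈ T | x.1 ∉ I} + #I * Fintype.card β := by
  rw [← card_filter_add_card_filter_not (s := T) (fun x => x.1 ∉ I)]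
  gcongr
  calc #{x ∈ T | ¬x.1 ∉ I} ≤ #(I ×ˢ (univ : Finset β)) :=
        card_le_card fun x hx => by simp_all
    _ = #I * Fintype.card β := by rw [card_product, Finset.card_univ]

lemma exists_mem_powersetCard_disjoint {α : Type*} [Fintype α] (A V : Set α)
    [DecidablePred (· ∈ V)] [DecidablePred (· ∈ A)] {m : ℕ} (h : (A ∩ V).ncard + m ≤ V.ncard) :
    ∃ T ∈ powersetCard m V.toFinset, Disjoint A T := by
  have hm : m ≤ (V \ A).ncard := by
    have := Set.ncard_inter_add_ncard_sdiff_eq_ncard V A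
    rw [Set.inter_comm] at this
    omega
  rw [Set.ncard_eq_toFinset_card'] at hm
  obtain ⟨T, hTsub, hTcard⟩ := exists_subset_card_eq hm
  refine ⟨T, mem_powersetCard.mpr ⟨hTsub.trans fun x hx => ?_, hTcard⟩,
    Set.disjoint_left.mpr fun x hxA hxT => ?_⟩
  · simp_all
  · simpa [hxA] using hTsub hxT

section Lift

variable {n ℓ : ℕ}

lemma liftGraph_adj_of_lt (σ : Fin n → Fin n → Equiv.Perm (Fin ℓ)) {i j : Fin n} (hij : i < j)
    (a : Fin ℓ) : (liftGraph n ℓ σ).Adj (i, a) (j, σ i j a) := by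
  simp [liftGraph, hij, hij.ne]

lemma liftProb_le_card_div {p : SimpleGraph (Fin n × Fin ℓ) → Prop}
    (s : Finset (Fin n → Fin n → Equiv.Perm (Fin ℓ))) (h : ∀ σ, p (liftGraph n ℓ σ) → σ ∈ s) :
    liftProb n ℓ p ≤ #s / Fintype.card (Fin n → Fin n → Equiv.Perm (Fin ℓ)) := by
  classical
  unfold liftProb
  gcongr
  exact fun σ hσ => h σ (mem_filter.mp hσ).2

lemma liftProb_le_sum {ι : Type*} (s : Finset ι) {p : SimpleGraph (Fin n × Fin ℓ) → Prop}
    {q : ι → SimpleGraph (Fin n × Fin ℓ) → Prop} (h : ∀ G, p G → ∃ i ∈ s, q i G) :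
    liftProb n ℓ p ≤ ∑ i ∈ s, liftProb n ℓ (q i) := by
  classical
  unfold liftProb
  rw [← sum_div]
  gcongr
  rw [← Nat.cast_sum, Nat.cast_le]
  refine (card_le_card (t := s.biUnion fun i => {σ | q i (liftGraph n ℓ σ)})
    fun σ hσ => ?_).trans card_biUnion_le
  obtain ⟨i, hi, hq⟩ := h _ (mem_filter.mp hσ).2
  exact mem_biUnion.mpr ⟨i, hi, mem_filter.mpr ⟨mem_univ σ, hq⟩⟩

def fiberSlice (T : Finset (Fin n × Fin ℓ)) (j : Fin n) : Finset (Fin ℓ) := {b | (j, b) ∈ T}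

def noEdgePerms (S T : Finset (Fin n × Fin ℓ)) (i j : Fin n) : Finset (Equiv.Perm (Fin ℓ)) :=
  if i < j then univ.filter fun π =>
    ∀ a, ((i, a) ∈ S → (j, π a) ∉ T) ∧ ((j, π a) ∈ S → (i, a) ∉ T)
  else univ

def crossWeight (I : Finset (Fin n)) (T : Finset (Fin n × Fin ℓ)) (i j : Fin n) : ℕ :=
  if i ∈ I ∧ j ∉ I then #(fiberSlice T j) else 0

lemma mem_noEdgePerms_of_disjoint {S T : Finset (Fin n × Fin ℓ)}
    {σ : Fin n → Fin n → Equiv.Perm (Fin ℓ)}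
    (h : Disjoint (nbhdSet (liftGraph n ℓ σ) S) T) (i j : Fin n) :
    σ i j ∈ noEdgePerms S T i j := by
  unfold noEdgePerms
  split_ifs with hij
  · refine mem_filter.mpr ⟨mem_univ _, fun a => ⟨fun ha hT => ?_, fun ha hT => ?_⟩⟩
    · exact h.notMem_of_mem_left (Or.inr ⟨_, ha, liftGraph_adj_of_lt σ hij a⟩) hT
    · exact h.notMem_of_mem_left (Or.inr ⟨_, ha, (liftGraph_adj_of_lt σ hij a).symm⟩) hT
  · exact mem_univ _

lemma card_noEdgePerms_le (S T : Finset (Fin n × Fin ℓ)) {i j : Fin n} (hij : i < j) :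
    (#(noEdgePerms S T i j) : ℝ) ≤ Real.exp (-((crossWeight (S.image Prod.fst) T i j
      + crossWeight (S.image Prod.fst) T j i : ℕ) : ℝ) / ℓ) * ℓ ! := by
  have hperms : noEdgePerms S T i j = univ.filter fun π : Equiv.Perm (Fin ℓ) =>
      ∀ a, ((i, a) ∈ S → (j, π a) ∉ T) ∧ ((j, π a) ∈ S → (i, a) ∉ T) :=
    if_pos hij
  by_cases hi : i ∈ S.image Prod.fst ∧ j ∉ S.image Prod.fst
  · obtain ⟨a, ha⟩ : ∃ a, (i, a) ∈ S := by simpa using hi.1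
    have hA : noEdgePerms S T i j ⊆ univ.filter fun π => π a ∉ fiberSlice T j := fun π hπ => by
      rw [hperms] at hπ
      simpa [fiberSlice] using ((mem_filter.mp hπ).2 a).1 ha
    have := card_filter_perm_apply_notMem_le a (fiberSlice T j)
    simp only [crossWeight, if_pos hi, if_neg (fun h : _ ∧ _ => hi.2 h.1), add_zero]
    simp only [Fintype.card_fin] at this
    exact (Nat.cast_le.mpr (card_le_card hA)).trans this
  by_cases hj : j ∈ S.image Prod.fst ∧ i ∉ S.image Prod.fst
  · obtain ⟨b, hb⟩ : ∃ b, (j, b) ∈ S := by simpa using hj.1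
    have hA : noEdgePerms S T i j ⊆ univ.filter fun π => π⁻¹ b ∉ fiberSlice T i := fun π hπ => by
      rw [hperms] at hπ
      have := ((mem_filter.mp hπ).2 (π⁻¹ b)).2
      simp_all [fiberSlice]
    have := card_filter_perm_inv_apply_notMem_le b (fiberSlice T i)
    simp only [crossWeight, if_pos hj, if_neg (fun h : _ ∧ _ => hj.2 h.1), zero_add]
    simp only [Fintype.card_fin] at this
    exact (Nat.cast_le.mpr (card_le_card hA)).trans this
  · simp only [crossWeight, if_neg hi, if_neg hj]
    simpa [Fintype.card_perm] using card_le_univ (noEdgePerms S T i j)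

lemma sum_crossWeight (I : Finset (Fin n)) (T : Finset (Fin n × Fin ℓ)) :
    ∑ i, ∑ j, crossWeight I T i j = #I * #{x ∈ T | x.1 ∉ I} := by
  have hslices : ∑ j ∈ Iᶜ, #(fiberSlice T j) = #{x ∈ T | x.1 ∉ I} := by
    rw [card_eq_sum_card_fiberwise (f := Prod.fst) (t := Iᶜ) (fun x hx => by simp_all)]
    refine sum_congr rfl fun j hj => card_nbij' (fun b => (j, b)) Prod.snd ?_ ?_ ?_ ?_
    · intro b hb
      simp_all [fiberSlice]
    · rintro ⟨i, b⟩ hx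
      obtain ⟨⟨hb, -⟩, rfl⟩ : ((i, b) ∈ T ∧ i ∉ I) ∧ i = j := by simpa using hx
      simpa [fiberSlice] using hb
    · intro b _
      rfl
    · rintro ⟨i, b⟩ hx
      simp_all
  simp only [crossWeight, ite_and, sum_ite_irrel, sum_const_zero, sum_ite_mem, univ_inter,
    sum_const, smul_eq_mul, ← hslices, ← sum_filter]
  congr 2
  ext
  simp

lemma liftProb_disjoint_nbhdSet_le (S T : Finset (Fin n × Fin ℓ)) :
    liftProb n ℓ (fun G => Disjoint (nbhdSet G S) T)
      ≤ Real.exp (-((#(S.image Prod.fst) * #{x ∈ T | x.1 ∉ S.image Prod.fst} : ℕ) : ℝ) / ℓ) := by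
  classical
  set w := crossWeight (S.image Prod.fst) T
  set c : Fin n → Fin n → ℝ := fun i j => ((if i < j then w i j + w j i else 0 : ℕ) : ℝ) / ℓ
  have hc : ∑ i, ∑ j, c i j
      = ((#(S.image Prod.fst) * #{x ∈ T | x.1 ∉ S.image Prod.fst} : ℕ) : ℝ) / ℓ := by
    rw [← sum_crossWeight, ← sum_sum_ite_lt_add_swap w (fun i => by simp [w, crossWeight])]
    simp only [c, Nat.cast_sum, sum_div]
  have hrow (i : Fin n) : (#(Fintype.piFinset (noEdgePerms S T i)) : ℝ)
      ≤ Real.exp (-∑ j, c i j) * Fintype.card (Fin n → Equiv.Perm (Fin ℓ)) := by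
    refine card_piFinset_le_exp_mul _ _ fun j => ?_
    rw [Fintype.card_perm, Fintype.card_fin]
    by_cases hij : i < j
    · simpa only [c, if_pos hij, neg_div] using card_noEdgePerms_le S T hij
    · simp [c, hij, noEdgePerms, Fintype.card_perm]
  have hcard : (0 : ℝ) < Fintype.card (Fin n → Fin n → Equiv.Perm (Fin ℓ)) := by
    exact_mod_cast Fintype.card_pos
  calc liftProb n ℓ (fun G => Disjoint (nbhdSet G S) T)
      ≤ #(Fintype.piFinset fun i => Fintype.piFinset (noEdgePerms S T i))
          / Fintype.card (Fin n → Fin n → Equiv.Perm (Fin ℓ)) :=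
        liftProb_le_card_div _ fun σ hσ => by
          simpa [Fintype.mem_piFinset] using mem_noEdgePerms_of_disjoint hσ
    _ ≤ Real.exp (-∑ i, ∑ j, c i j) * Fintype.card (Fin n → Fin n → Equiv.Perm (Fin ℓ))
          / Fintype.card (Fin n → Fin n → Equiv.Perm (Fin ℓ)) := by
        gcongr
        exact card_piFinset_le_exp_mul _ _ hrow
    _ = _ := by rw [mul_div_cancel_right₀ _ hcard.ne', hc, neg_div]

lemma liftProb_ncard_nbhdSet_inter_lt_le {U V : Set (Fin n × Fin ℓ)}
    {S : Finset (Fin n × Fin ℓ)} (hSU : ↑S ⊆ U) (hS : Set.InjOn Prod.fst (S : Set (Fin n × Fin ℓ)))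
    {x : ℝ} {m : ℕ} (hm : x + m ≤ V.ncard) :
    liftProb n ℓ (fun G => ((nbhdSet G U ∩ V).ncard : ℝ) < x)
      ≤ 2 ^ (n * ℓ) * Real.exp (-(#S * ((m : ℝ) - #S * ℓ)) / ℓ) := by
  classical
  have hI : #(S.image Prod.fst) = #S := card_image_of_injOn hS
  calc liftProb n ℓ (fun G => ((nbhdSet G U ∩ V).ncard : ℝ) < x)
      ≤ ∑ T ∈ powersetCard m V.toFinset, liftProb n ℓ (fun G => Disjoint (nbhdSet G S) T) := by
        refine liftProb_le_sum _ fun G hG => exists_mem_powersetCard_disjoint _ _ ?_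
        have hmono : (nbhdSet G S ∩ V).ncard ≤ (nbhdSet G U ∩ V).ncard :=
          Set.ncard_le_ncard (Set.inter_subset_inter_left _ fun v hv => ?_)
        · exact_mod_cast (show ((nbhdSet G S ∩ V).ncard + m : ℝ) ≤ V.ncard by
            linarith [(Nat.cast_le (α := ℝ)).mpr hmono])
        · rcases hv with hv | ⟨u, hu, hadj⟩
          exacts [Or.inl (hSU hv), Or.inr ⟨u, hSU hu, hadj⟩]
    _ ≤ ∑ _T ∈ powersetCard m V.toFinset, Real.exp (-(#S * ((m : ℝ) - #S * ℓ)) / ℓ) := by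
        refine sum_le_sum fun T hT => (liftProb_disjoint_nbhdSet_le S T).trans ?_
        have hsplit := card_le_card_filter_fst_notMem_add (S.image Prod.fst) T
        rw [(mem_powersetCard.mp hT).2, hI, Fintype.card_fin] at hsplit
        rw [hI]
        have : (m : ℝ) ≤ #{x ∈ T | x.1 ∉ S.image Prod.fst} + #S * ℓ := by exact_mod_cast hsplit
        push_cast
        gcongr
        linarith
    _ ≤ 2 ^ (n * ℓ) * Real.exp (-(#S * ((m : ℝ) - #S * ℓ)) / ℓ) := by
        rw [sum_const, card_powersetCard, nsmul_eq_mul]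
        gcongr
        have hV : #V.toFinset ≤ n * ℓ := by simpa using card_le_univ V.toFinset
        exact_mod_cast (Nat.choose_le_two_pow _ _).trans (Nat.pow_le_pow_right two_pos hV)

end Lift

lemma exponent_bound {γ n ℓ u k m : ℝ} (hγ0 : 0 < γ) (hγ : γ ≤ 1 / 2) (hℓ : 1 ≤ ℓ)
    (hγn : 16 ≤ γ * n) (hℓn : ℓ ≤ γ ^ 2 * n / 4) (huℓ : 2 * ℓ ≤ γ * u) (hun : u ≤ n)
    (hk : min u (2 * γ * n) ≤ k) (hk' : k ≤ 2 * γ * n + 1) (hm : 4 * γ * n * ℓ - 1 ≤ m) :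
    n * ℓ + γ ^ 3 * n * u / 4 ≤ k * (m - k * ℓ) / ℓ := by
  have hu : 0 ≤ u := by nlinarith
  have hn : 0 ≤ n := hu.trans hun
  have hk0 : 0 ≤ k := (le_min hu (by nlinarith)).trans hk
  have hγ2 : γ ^ 2 ≤ 1 / 4 := by nlinarith
  have hgap : k * (2 * γ * n - 2) ≤ k * (m - k * ℓ) / ℓ := by
    rw [le_div_iff₀ (by linarith)]
    nlinarith [mul_le_mul_of_nonneg_left hk' hk0]
  refine le_trans ?_ hgap
  rcases le_total u (2 * γ * n) with h | h
  · rw [min_eq_left h] at hk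
    have hnℓ : n * ℓ ≤ γ * n * u / 2 := by nlinarith
    have hcube : γ ^ 3 * n * u / 4 ≤ γ * n * u / 16 := by
      nlinarith [mul_le_mul_of_nonneg_right hγ2 (by positivity : 0 ≤ γ * n * u)]
    nlinarith [mul_le_mul_of_nonneg_right hk (by linarith : (0:ℝ) ≤ 2 * γ * n - 2)]
  · rw [min_eq_right h] at hk
    have hnℓ : n * ℓ ≤ γ ^ 2 * n ^ 2 / 4 := by nlinarith
    have hcube : γ ^ 3 * n * u / 4 ≤ γ ^ 2 * n ^ 2 / 8 := by
      nlinarith [mul_le_mul_of_nonneg_left hun (by positivity : 0 ≤ γ ^ 3 * n),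
        mul_le_mul_of_nonneg_right hγ (by positivity : 0 ≤ γ ^ 2 * n ^ 2)]
    nlinarith [mul_le_mul_of_nonneg_right hk (by linarith : (0:ℝ) ≤ 2 * γ * n - 2)]

lemma two_mul_le_mul_of_le_sqrt {β γ n ℓ u : ℝ} (hβ0 : 0 < β) (hγ0 : 0 < γ) (hℓ : 0 ≤ ℓ)
    (hℓn : ℓ ≤ β ^ 2 * γ ^ 2 * n) (hu : 2 * β * √(n * ℓ) ≤ u) : 2 * ℓ ≤ γ * u := by
  have hnℓ : 0 ≤ n * ℓ := by
    refine (mul_nonneg_iff_of_pos_left (by positivity : 0 < β ^ 2 * γ ^ 2)).1 ?_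
    nlinarith [mul_le_mul_of_nonneg_right hℓn hℓ]
  have hu2 : 4 * β ^ 2 * (n * ℓ) ≤ u ^ 2 :=
    calc 4 * β ^ 2 * (n * ℓ) = (2 * β * √(n * ℓ)) ^ 2 := by rw [mul_pow, Real.sq_sqrt hnℓ]; ring
      _ ≤ u ^ 2 := pow_le_pow_left₀ (by positivity) hu 2
  have hsq : (2 * ℓ) ^ 2 ≤ (γ * u) ^ 2 := by
    nlinarith [mul_le_mul_of_nonneg_left hu2 (sq_nonneg γ), mul_le_mul_of_nonneg_right hℓn hℓ]
  have hu0 : 0 ≤ u := le_trans (by positivity) hu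
  exact (pow_le_pow_iff_left₀ (by positivity) (by positivity) two_ne_zero).1 hsq

lemma two_pow_le_exp (k : ℕ) : (2 : ℝ) ^ k ≤ Real.exp k := by
  rw [← Real.exp_one_pow]
  exact pow_le_pow_left₀ zero_le_two (by linarith [Real.add_one_le_exp 1]) k

/-- For `0 < β, γ ≤ 1/2` and `2 ≤ ℓ ≤ β²γ²n`, a fixed partial transversal `U` with
`|U| ≥ 2β√(nℓ)` and a fixed vertex set `V` with `|V| ≥ 5γnℓ` satisfy
`|N(U) ∩ V| < γnℓ` with probability at most `e^{-γ³n|U|/4}`. -/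
theorem stmt14 (β γ : ℝ) (hβ0 : 0 < β) (hβ : β ≤ 1 / 2) (hγ0 : 0 < γ) (hγ : γ ≤ 1 / 2)
    (n ℓ : ℕ) (hℓ2 : 2 ≤ ℓ) (hℓn : (ℓ : ℝ) ≤ β ^ 2 * γ ^ 2 * n)
    (U V : Set (Fin n × Fin ℓ))
    (hUtrans : ∀ x ∈ U, ∀ y ∈ U, x.1 = y.1 → x = y)
    (hUcard : 2 * β * Real.sqrt (n * ℓ) ≤ (U.ncard : ℝ))
    (hVcard : 5 * γ * n * ℓ ≤ (V.ncard : ℝ)) :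
    liftProb n ℓ (fun G => ((nbhdSet G U ∩ V).ncard : ℝ) < γ * n * ℓ)
      ≤ Real.exp (-γ ^ 3 * n * U.ncard / 4) := by
  classical
  have hℓ : (2 : ℝ) ≤ ℓ := by exact_mod_cast hℓ2
  have hℓγ : (ℓ : ℝ) ≤ γ ^ 2 * n / 4 := by
    nlinarith [mul_le_mul_of_nonneg_right (pow_le_pow_left₀ hβ0.le hβ 2)
      (by positivity : (0 : ℝ) ≤ γ ^ 2 * n)]
  have hγn : 16 ≤ γ * n := by nlinarith
  have hun : U.ncard ≤ n := by
    simpa using Set.ncard_le_ncard_of_injOn Prod.fst (t := Set.univ) (by simp) hUtrans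
  obtain ⟨S, hSU, hSK⟩ := exists_subset_card_eq
    ((min_le_left U.ncard ⌈2 * γ * n⌉₊).trans_eq (Set.ncard_eq_toFinset_card' U))
  have hSU' : ↑S ⊆ U := fun x hx => by simpa using hSU hx
  calc liftProb n ℓ (fun G => ((nbhdSet G U ∩ V).ncard : ℝ) < γ * n * ℓ)
      ≤ 2 ^ (n * ℓ) * Real.exp (-(#S * ((⌊4 * γ * n * ℓ⌋₊ : ℝ) - #S * ℓ)) / ℓ) :=
        liftProb_ncard_nbhdSet_inter_lt_le hSU'
          (fun x hx y hy => hUtrans x (hSU' hx) y (hSU' hy))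
          (by linarith [Nat.floor_le (by positivity : 0 ≤ 4 * γ * n * ℓ)])
    _ ≤ Real.exp (n * ℓ) * Real.exp (-(n * ℓ + γ ^ 3 * n * U.ncard / 4)) := by
        gcongr
        · exact_mod_cast two_pow_le_exp (n * ℓ)
        · rw [neg_div, neg_le_neg_iff]
          refine exponent_bound hγ0 hγ (by linarith) hγn hℓγ
            (two_mul_le_mul_of_le_sqrt hβ0 hγ0 (by positivity) hℓn hUcard)
            (by exact_mod_cast hun) ?_ ?_ (Nat.sub_one_lt_floor _).le
          · rw [hSK, Nat.cast_min]
            exact min_le_min_left _ (Nat.le_ceil _)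
          · rw [hSK]
            exact (Nat.cast_le.mpr (min_le_right _ _)).trans
              (Nat.ceil_lt_add_one (by positivity)).le
    _ = Real.exp (-γ ^ 3 * n * U.ncard / 4) := by rw [← Real.exp_add]; ring_nf
end

section
/- Let A and B be disjoint finite sets with |A| = |B| = ℓ, and let M be a uniformly random perfect matching between A and B. Fix disjoint A₁, A₂ ⊆ A, disjoint B₁, B₂ ⊆ B, a vertex u ∈ A \ (A₁ ∪ A₂), a subset U ⊆ B₁, and a vertex v ∈ B₁ \ U. Let 𝓔 denote the event that M contains no edge between A₁ and B₂, no edge between A₂ and B₁, and no edge between u and U. Then Pr[{uv ∈ M} ∩ 𝓔] · ℓ² ≥ (ℓ − |A₁| − |A₂| − |B₂|) · Pr[𝓔]; in particular, whenever Pr[𝓔] > 0, the conditional probability Pr[uv ∈ M | 𝓔] is at least (ℓ − |A₁| − |A₂| − |B₂|)/ℓ². -/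
/-- The probability of the event `s` for a uniformly random perfect matching
(bijection) between two `ℓ`-sets. -/
noncomputable def matchProb (ℓ : ℕ) {α β : Type*} (s : Set (α ≃ β)) : ℝ :=
  (s.ncard : ℝ) / (Nat.factorial ℓ : ℝ)

/-- For a uniformly random perfect matching `M` between `ℓ`-sets `A` and `B`, with
`𝓔` the event that `M` has no edge between `A₁` and `B₂`, none between `A₂` and `B₁`,
and none between `u` and `U`:
`Pr[{uv ∈ M} ∩ 𝓔] ⬝ ℓ² ≥ (ℓ - |A₁| - |A₂| - |B₂|) ⬝ Pr[𝓔]`, and in particular when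
`Pr[𝓔] > 0` the conditional probability of `uv ∈ M` given `𝓔` is at least
`(ℓ - |A₁| - |A₂| - |B₂|)/ℓ²`. -/
theorem stmt15 (ℓ : ℕ) (α β : Type) [Fintype α] [Fintype β]
    (hα : Fintype.card α = ℓ) (hβ : Fintype.card β = ℓ)
    (A₁ A₂ : Finset α) (hA : Disjoint A₁ A₂)
    (B₁ B₂ : Finset β) (hB : Disjoint B₁ B₂)
    (u : α) (hu₁ : u ∉ A₁) (hu₂ : u ∉ A₂)
    (U : Finset β) (hU : U ⊆ B₁) (v : β) (hv₁ : v ∈ B₁) (hv₂ : v ∉ U)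
    (Ev : Set (α ≃ β))
    (hEv : Ev = {σ : α ≃ β | (∀ a ∈ A₁, σ a ∉ B₂) ∧ (∀ a ∈ A₂, σ a ∉ B₁) ∧ σ u ∉ U}) :
    ((ℓ : ℝ) - A₁.card - A₂.card - B₂.card) * matchProb ℓ Ev
        ≤ matchProb ℓ ({σ : α ≃ β | σ u = v} ∩ Ev) * (ℓ : ℝ) ^ 2 ∧
      (0 < matchProb ℓ Ev →
        ((ℓ : ℝ) - A₁.card - A₂.card - B₂.card) / (ℓ : ℝ) ^ 2
          ≤ matchProb ℓ ({σ : α ≃ β | σ u = v} ∩ Ev) / matchProb ℓ Ev) := by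
  classical
  set P : (α ≃ β) → Prop :=
    fun σ => (∀ a ∈ A₁, σ a ∉ B₂) ∧ (∀ a ∈ A₂, σ a ∉ B₁) ∧ σ u ∉ U with hPdef
  set Evf : Finset (α ≃ β) := Finset.univ.filter P with hEvf
  set Tf : Finset (α ≃ β) := Evf.filter (fun σ => σ u = v) with hTf
  have hEvSet : Ev = ↑Evf := by
    rw [hEv]; ext σ; simp [hEvf, hPdef]
  have hTSet : {σ : α ≃ β | σ u = v} ∩ Ev = ↑Tf := by
    rw [hEv]; ext σ; simp [hTf, hEvf, hPdef]; tauto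
  set s : ℕ := A₁.card + A₂.card + B₂.card with hs
  -- the set of admissible "third vertices"
  set C : (α ≃ β) → Finset α :=
    fun σ => Finset.univ.filter (fun c => c ∉ A₁ ∧ c ∉ A₂ ∧ σ c ∉ B₂) with hCdef
  have hC : ∀ σ : α ≃ β, ℓ ≤ s + (C σ).card := by
    intro σ
    have hsub : (Finset.univ : Finset α) ⊆ A₁ ∪ A₂ ∪ B₂.image σ.symm ∪ C σ := by
      intro c _
      simp only [Finset.mem_union, Finset.mem_image, hCdef, Finset.mem_filter,
        Finset.mem_univ, true_and]
      by_cases h1 : c ∈ A₁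
      · tauto
      by_cases h2 : c ∈ A₂
      · tauto
      by_cases h3 : σ c ∈ B₂
      · exact Or.inl (Or.inr ⟨σ c, h3, by simp⟩)
      · tauto
    calc ℓ = (Finset.univ : Finset α).card := by rw [Finset.card_univ, hα]
      _ ≤ (A₁ ∪ A₂ ∪ B₂.image σ.symm ∪ C σ).card := Finset.card_le_card hsub
      _ ≤ (A₁ ∪ A₂ ∪ B₂.image σ.symm).card + (C σ).card := Finset.card_union_le _ _
      _ ≤ ((A₁ ∪ A₂).card + (B₂.image σ.symm).card) + (C σ).card := by
          exact Nat.add_le_add_right (Finset.card_union_le _ _) _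
      _ ≤ ((A₁.card + A₂.card) + B₂.card) + (C σ).card := by
          have := Finset.card_union_le A₁ A₂
          have := Finset.card_image_le (f := σ.symm) (s := B₂)
          omega
      _ = s + (C σ).card := by rw [hs]
  -- the switching permutation
  set pi : α → α → Equiv.Perm α := fun a c =>
    if a = u then Equiv.refl α
    else if c = u then Equiv.swap u a
    else (Equiv.swap a c).trans (Equiv.swap u a) with hpi
  set f : (Σ _ : α ≃ β, α) → (α ≃ β) × α × α := fun p =>
    ((pi (p.1.symm v) p.2).trans p.1, p.1.symm v, p.2) with hf
  set S : Finset (Σ _ : α ≃ β, α) := Evf.sigma (fun σ => C σ) with hS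
  -- mapping property
  have hmaps : ∀ p ∈ S, f p ∈ Tf ×ˢ ((Finset.univ : Finset α) ×ˢ (Finset.univ : Finset α)) := by
    rintro ⟨σ, c⟩ hp
    rw [hS, Finset.mem_sigma] at hp
    obtain ⟨hσ, hc⟩ := hp
    rw [hEvf, Finset.mem_filter] at hσ
    obtain ⟨-, h1, h2, h3⟩ := hσ
    rw [hCdef, Finset.mem_filter] at hc
    obtain ⟨-, hc1, hc2, hc3⟩ := hc
    set a : α := σ.symm v with hadef
    have hav : σ a = v := σ.apply_symm_apply v
    have haA₂ : a ∉ A₂ := fun h => (h2 a h) (hav ▸ hv₁)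
    set τ : α ≃ β := (pi a c).trans σ with hτ
    have hτx : ∀ x, τ x = σ (pi a c x) := fun x => rfl
    -- key pointwise facts
    have key : τ u = v ∧ (∀ x ∈ A₁, τ x ∉ B₂) ∧ (∀ x ∈ A₂, τ x ∉ B₁) := by
      by_cases hau : a = u
      · have hσu : σ u = v := by rw [← hau, hav]
        have : ∀ x, τ x = σ x := by intro x; rw [hτx, hpi]; simp [hau]
        refine ⟨by rw [this, hσu], fun x hx => by rw [this]; exact h1 x hx,
          fun x hx => by rw [this]; exact h2 x hx⟩
      by_cases hcu : c = u
      · -- pi = swap u a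
        have hπ : pi a c = Equiv.swap u a := by rw [hpi]; simp [hau, hcu]
        have hτu : τ u = v := by rw [hτx, hπ, Equiv.swap_apply_left, hav]
        have hτa : τ a = σ u := by rw [hτx, hπ, Equiv.swap_apply_right]
        refine ⟨hτu, ?_, ?_⟩
        · intro x hx
          by_cases hxa : x = a
          · subst hxa; rw [hτa]; rw [← hcu]; exact hc3
          · have hxu : x ≠ u := fun h => hu₁ (h ▸ hx)
            rw [hτx, hπ, Equiv.swap_apply_of_ne_of_ne hxu hxa]
            exact h1 x hx
        · intro x hx
          have hxa : x ≠ a := fun h => haA₂ (h ▸ hx)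
          have hxu : x ≠ u := fun h => hu₂ (h ▸ hx)
          rw [hτx, hπ, Equiv.swap_apply_of_ne_of_ne hxu hxa]
          exact h2 x hx
      · -- pi = (swap a c).trans (swap u a)
        have hπ : ∀ x, pi a c x = Equiv.swap u a (Equiv.swap a c x) := by
          intro x; rw [hpi]; simp [hau, hcu]
        have hua : u ≠ a := fun h => hau h.symm
        have huc : u ≠ c := fun h => hcu h.symm
        have hτu : τ u = v := by
          rw [hτx, hπ, Equiv.swap_apply_of_ne_of_ne hua huc, Equiv.swap_apply_left, hav]
        refine ⟨hτu, ?_, ?_⟩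
        · intro x hx
          have hxu : x ≠ u := fun h => hu₁ (h ▸ hx)
          have hxc : x ≠ c := fun h => hc1 (h ▸ hx)
          by_cases hxa : x = a
          · subst hxa
            have hca : c ≠ a := fun h => hxc h.symm
            rw [hτx, hπ, Equiv.swap_apply_left, Equiv.swap_apply_of_ne_of_ne hcu hca]
            exact hc3
          · rw [hτx, hπ, Equiv.swap_apply_of_ne_of_ne hxa hxc,
              Equiv.swap_apply_of_ne_of_ne hxu hxa]
            exact h1 x hx
        · intro x hx
          have hxu : x ≠ u := fun h => hu₂ (h ▸ hx)
          have hxc : x ≠ c := fun h => hc2 (h ▸ hx)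
          have hxa : x ≠ a := fun h => haA₂ (h ▸ hx)
          rw [hτx, hπ, Equiv.swap_apply_of_ne_of_ne hxa hxc,
            Equiv.swap_apply_of_ne_of_ne hxu hxa]
          exact h2 x hx
    obtain ⟨k1, k2, k3⟩ := key
    have hτEv : τ ∈ Tf := by
      rw [hTf, Finset.mem_filter, hEvf, Finset.mem_filter]
      exact ⟨⟨Finset.mem_univ _, k2, k3, by rw [k1]; exact hv₂⟩, k1⟩
    rw [hf]
    simp only [Finset.mem_product, Finset.mem_univ, and_true]
    exact hτEv
  -- injectivity
  have hinj : Set.InjOn f ↑S := by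
    rintro ⟨σ₁, c₁⟩ - ⟨σ₂, c₂⟩ - heq
    rw [hf] at heq
    simp only [Prod.mk.injEq] at heq
    obtain ⟨e1, e2, e3⟩ := heq
    have hπeq : pi (σ₁.symm v) c₁ = pi (σ₂.symm v) c₂ := by rw [e2, e3]
    have hσeq : σ₁ = σ₂ := by
      have := congrArg (fun e => (pi (σ₁.symm v) c₁).symm.trans e) e1
      simpa [← Equiv.trans_assoc, hπeq] using this
    subst hσeq; subst e3; rfl
  have hS2 : S.card ≤ Tf.card * (ℓ * ℓ) := by
    calc S.card ≤ (Tf ×ˢ ((Finset.univ : Finset α) ×ˢ (Finset.univ : Finset α))).card :=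
          Finset.card_le_card_of_injOn f hmaps hinj
      _ = Tf.card * (ℓ * ℓ) := by
          simp [Finset.card_product, Finset.card_univ, hα]
  have hS1 : ℓ * Evf.card ≤ s * Evf.card + S.card := by
    rw [hS, Finset.card_sigma]
    calc ℓ * Evf.card = ∑ _σ ∈ Evf, ℓ := by
          rw [Finset.sum_const, smul_eq_mul, mul_comm]
      _ ≤ ∑ σ ∈ Evf, (s + (C σ).card) := Finset.sum_le_sum (fun σ _ => hC σ)
      _ = s * Evf.card + ∑ σ ∈ Evf, (C σ).card := by
          rw [Finset.sum_add_distrib, Finset.sum_const, smul_eq_mul, mul_comm]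
  have key : ℓ * Evf.card ≤ s * Evf.card + Tf.card * (ℓ * ℓ) := le_trans hS1 (by omega)
  -- pass to reals
  have keyR : ((ℓ : ℝ) - A₁.card - A₂.card - B₂.card) * Evf.card ≤ Tf.card * (ℓ : ℝ) ^ 2 := by
    have := (Nat.cast_le (α := ℝ)).2 key
    have hsR : (s : ℝ) = A₁.card + A₂.card + B₂.card := by rw [hs]; push_cast; ring
    push_cast at this
    rw [hsR] at this
    nlinarith [this]
  have hfac : (0 : ℝ) < (Nat.factorial ℓ : ℝ) := by positivity
  have hN : matchProb ℓ Ev = (Evf.card : ℝ) / (Nat.factorial ℓ : ℝ) := by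
    rw [matchProb, hEvSet, Set.ncard_coe_finset]
  have hT : matchProb ℓ ({σ : α ≃ β | σ u = v} ∩ Ev) = (Tf.card : ℝ) / (Nat.factorial ℓ : ℝ) := by
    rw [matchProb, hTSet, Set.ncard_coe_finset]
  have part1 : ((ℓ : ℝ) - A₁.card - A₂.card - B₂.card) * matchProb ℓ Ev
      ≤ matchProb ℓ ({σ : α ≃ β | σ u = v} ∩ Ev) * (ℓ : ℝ) ^ 2 := by
    rw [hN, hT, ← mul_div_assoc, div_mul_eq_mul_div]
    exact div_le_div_of_nonneg_right keyR hfac.le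
  refine ⟨part1, ?_⟩
  intro hpos
  by_cases hℓ : ℓ = 0
  · subst hℓ
    simp only [Nat.cast_zero, ne_eq, OfNat.ofNat_ne_zero, not_false_eq_true, zero_pow,
      div_zero]
    have h1 : 0 ≤ matchProb 0 ({σ : α ≃ β | σ u = v} ∩ Ev) := by
      rw [hT]; positivity
    positivity
  · have hℓ2 : (0 : ℝ) < (ℓ : ℝ) ^ 2 := by
      have : 0 < ℓ := Nat.pos_of_ne_zero hℓ
      positivity
    rw [div_le_div_iff₀ hℓ2 hpos]
    linarith [part1]
end

section
/- Let n ≥ 3 and let G be a finite simple graph in which every vertex has degree exactly n − 1. Suppose that for every set X ⊆ V(G) with |X| = n there exist two distinct vertices u, v ∈ X that have at least two common neighbors lying outside of X. Then G does not contain a topological clique of order n (i.e. no subdivision of K_n as a subgraph). -/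
/-- `f : Fin m → V` is the family of branch vertices of a topological clique of order `m`
in `G`: `f` is injective and there are pairwise internally vertex-disjoint paths between
the branch vertices whose internal vertices avoid all branch vertices. -/
def HasTopCliqueFun {V : Type*} (G : SimpleGraph V) {m : ℕ} (f : Fin m → V) : Prop :=
  Function.Injective f ∧
  ∃ P : ∀ i j : Fin m, G.Walk (f i) (f j),
    (∀ i j : Fin m, i < j → (P i j).IsPath) ∧
    (∀ i j : Fin m, i < j → ∀ k : Fin m, f k ∉ (P i j).support.tail.dropLast) ∧
    (∀ i j i' j' : Fin m, i < j → i' < j' → (i, j) ≠ (i', j') →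
      ∀ x, x ∈ (P i j).support.tail.dropLast → x ∉ (P i' j').support.tail.dropLast)

/-- `G` contains a topological clique of order `m` (a subdivision of `K_m`). -/
def HasTopClique {V : Type*} (G : SimpleGraph V) (m : ℕ) : Prop :=
  ∃ f : Fin m → V, HasTopCliqueFun G f

open SimpleGraph

/-- Membership in the interior (internal vertices) of a path. -/
lemma mem_interior_iff {V : Type*} {G : SimpleGraph V} {a b : V} {p : G.Walk a b}
    (hp : p.IsPath) {x : V} :
    x ∈ p.support.tail.dropLast ↔ x ∈ p.support ∧ x ≠ a ∧ x ≠ b := by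
  cases p with
  | nil => simp
  | @cons _ c _ h q =>
    have hsupp : (Walk.cons h q).support = a :: q.support := Walk.support_cons h q
    have hne : q.support ≠ [] := q.support_ne_nil
    have hlast : q.support.getLast hne = b := q.getLast_support
    have hq : q.support = q.support.dropLast ++ [b] := by
      conv_lhs => rw [← List.dropLast_append_getLast hne]
      rw [hlast]
    have hnd : (a :: q.support).Nodup := by
      have := hp.support_nodup; rwa [hsupp] at this
    have hna : a ∉ q.support := (List.nodup_cons.mp hnd).1
    have hndq : q.support.Nodup := (List.nodup_cons.mp hnd).2
    have hnb : b ∉ q.support.dropLast := by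
      rw [hq] at hndq
      have := List.disjoint_of_nodup_append hndq
      intro hb; exact this hb (by simp)
    rw [hsupp]
    simp only [List.tail_cons]
    constructor
    · intro hx
      have hx' : x ∈ q.support.dropLast := by
        rw [hq] at hx; simpa using hx
      refine ⟨by simp [List.mem_cons, List.dropLast_subset _ hx'], ?_, ?_⟩
      · rintro rfl; exact hna (List.dropLast_subset _ hx')
      · rintro rfl; exact hnb hx'
    · rintro ⟨hx, hxa, hxb⟩
      rw [hq]
      simp only [List.dropLast_concat]
      rcases List.mem_cons.mp hx with rfl | hx'
      · exact absurd rfl hxa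
      · rw [hq] at hx'
        rcases List.mem_append.mp hx' with h1 | h2
        · exact h1
        · simp at h2; exact absurd h2 hxb

lemma mem_interior_reverse {V : Type*} {G : SimpleGraph V} {a b : V} {p : G.Walk a b}
    (hp : p.IsPath) {x : V} :
    x ∈ p.reverse.support.tail.dropLast ↔ x ∈ p.support.tail.dropLast := by
  rw [mem_interior_iff hp.reverse, mem_interior_iff hp, Walk.support_reverse,
    List.mem_reverse]
  tauto

/-- From a topological clique we extract a symmetric family of paths. -/
lemma exists_sym {V : Type*} {G : SimpleGraph V} {n : ℕ} {f : Fin n → V}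
    (h : HasTopCliqueFun G f) :
    ∃ Q : ∀ i j : Fin n, G.Walk (f i) (f j),
      (∀ i j, i ≠ j → (Q i j).IsPath) ∧
      (∀ i j, i ≠ j → ∀ k, f k ∉ (Q i j).support.tail.dropLast) ∧
      (∀ i j i' j', i ≠ j → i' ≠ j' → ∀ x, x ∈ (Q i j).support.tail.dropLast →
        x ∈ (Q i' j').support.tail.dropLast → (i = i' ∧ j = j') ∨ (i = j' ∧ j = i')) := by
  obtain ⟨hinj, P, hpath, havoid, hdisj⟩ := h
  refine ⟨fun i j => if h : i < j then P i j else (P j i).reverse, ?_, ?_, ?_⟩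
  · intro i j hij
    rcases lt_or_gt_of_ne hij with h | h
    · simp only [dif_pos h]; exact hpath i j h
    · simp only [dif_neg (not_lt_of_gt h)]; exact (hpath j i h).reverse
  · intro i j hij k
    rcases lt_or_gt_of_ne hij with h | h
    · simp only [dif_pos h]; exact havoid i j h k
    · simp only [dif_neg (not_lt_of_gt h)]
      rw [mem_interior_reverse (hpath j i h)]
      exact havoid j i h k
  · intro i j i' j' hij hij' x hx hx'
    have key : ∀ (i j : Fin n) (hij : i ≠ j),
        x ∈ ((fun i j => if h : i < j then P i j else (P j i).reverse) i j).support.tail.dropLast →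
        (i < j ∧ x ∈ (P i j).support.tail.dropLast) ∨
        (j < i ∧ x ∈ (P j i).support.tail.dropLast) := by
      intro i j hij hx
      rcases lt_or_gt_of_ne hij with h | h
      · left; refine ⟨h, ?_⟩; simpa only [dif_pos h] using hx
      · right; refine ⟨h, ?_⟩
        simp only [dif_neg (not_lt_of_gt h)] at hx
        rwa [mem_interior_reverse (hpath j i h)] at hx
    have pairs : ∀ (a b c d : Fin n), a < b → c < d →
        x ∈ (P a b).support.tail.dropLast → x ∈ (P c d).support.tail.dropLast →
        a = c ∧ b = d := by
      intro a b c d hab hcd h1 h2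
      by_contra hne
      refine hdisj a b c d hab hcd ?_ x h1 h2
      intro hcon
      exact hne ⟨congrArg Prod.fst hcon, congrArg Prod.snd hcon⟩
    rcases key i j hij hx with ⟨h1, m1⟩ | ⟨h1, m1⟩ <;>
      rcases key i' j' hij' hx' with ⟨h2, m2⟩ | ⟨h2, m2⟩
    · exact Or.inl (pairs _ _ _ _ h1 h2 m1 m2)
    · obtain ⟨e1, e2⟩ := pairs _ _ _ _ h1 h2 m1 m2; exact Or.inr ⟨e1, e2⟩
    · obtain ⟨e1, e2⟩ := pairs _ _ _ _ h1 h2 m1 m2; exact Or.inr ⟨e2, e1⟩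
    · obtain ⟨e1, e2⟩ := pairs _ _ _ _ h1 h2 m1 m2; exact Or.inl ⟨e2, e1⟩
/-- If `G` is an `(n-1)`-regular graph (`n ≥ 3`) in which every `n`-set `X` of vertices
contains two distinct vertices with at least two common neighbors outside `X`, then `G`
contains no subdivision of `K_n`. -/
theorem stmt16 {V : Type} [Fintype V] [DecidableEq V] (G : SimpleGraph V)
    [DecidableRel G.Adj] (n : ℕ) (hn : 3 ≤ n)
    (hreg : ∀ v : V, G.degree v = n - 1)
    (hX : ∀ X : Finset V, X.card = n → ∃ u ∈ X, ∃ v ∈ X, u ≠ v ∧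
      2 ≤ ((G.neighborFinset u ∩ G.neighborFinset v) \ X).card) :
    ¬ HasTopClique G n := by

  rintro ⟨f, htop⟩
  have hinj := htop.1
  obtain ⟨Q, hQpath, hQavoid, hQdisj⟩ := exists_sym htop
  set X : Finset V := Finset.univ.image f with hXdef
  have hXcard : X.card = n := by
    rw [hXdef, Finset.card_image_of_injective _ hinj, Finset.card_univ, Fintype.card_fin]
  -- basic facts about second vertices
  have hlen : ∀ i j : Fin n, i ≠ j → 0 < (Q i j).length := by
    intro i j hij
    rcases Nat.eq_zero_or_pos (Q i j).length with h | h
    · exact absurd (hinj (Walk.eq_of_length_eq_zero h)) hij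
    · exact h
  have hadj : ∀ i j : Fin n, (hij : i ≠ j) → G.Adj (f i) ((Q i j).getVert 1) := by
    intro i j hij
    have := (Q i j).adj_getVert_succ (hlen i j hij)
    rwa [Walk.getVert_zero] at this
  have hmem : ∀ i j : Fin n, (hij : i ≠ j) → (Q i j).getVert 1 ∈ (Q i j).support := by
    intro i j hij
    exact Walk.mem_support_iff_exists_getVert.mpr ⟨1, rfl, hlen i j hij⟩
  -- a second vertex not equal to the far endpoint is an interior vertex
  have hint : ∀ i j : Fin n, (hij : i ≠ j) → (Q i j).getVert 1 ≠ f j →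
      (Q i j).getVert 1 ∈ (Q i j).support.tail.dropLast := by
    intro i j hij hne
    exact (mem_interior_iff (hQpath i j hij)).mpr ⟨hmem i j hij, (hadj i j hij).ne', hne⟩
  -- if a second vertex is a branch vertex, it is the far endpoint
  have hsecX : ∀ i j : Fin n, (hij : i ≠ j) → (Q i j).getVert 1 ∈ X →
      (Q i j).getVert 1 = f j := by
    intro i j hij hmemX
    by_contra hne
    obtain ⟨m, -, hm⟩ := Finset.mem_image.mp hmemX
    exact hQavoid i j hij m (hm ▸ hint i j hij hne)
  -- the second-vertex map is injective on the complement of i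
  have hinj2 : ∀ i : Fin n, Set.InjOn (fun k => (Q i k).getVert 1)
      ((Finset.univ.erase i : Finset (Fin n)) : Set (Fin n)) := by
    intro i k hk k' hk' heq
    simp only [Finset.coe_erase, Set.mem_diff] at hk hk'
    have hki : k ≠ i := by simpa using hk.2
    have hk'i : k' ≠ i := by simpa using hk'.2
    dsimp only at heq
    by_cases hmemX : (Q i k).getVert 1 ∈ X
    · have e1 := hsecX i k hki.symm hmemX
      have e2 := hsecX i k' hk'i.symm (heq ▸ hmemX)
      exact hinj (e1.symm.trans (heq.trans e2))
    · have m1 : (Q i k).getVert 1 ∈ (Q i k).support.tail.dropLast := by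
        refine hint i k hki.symm ?_
        intro hc
        refine hmemX ?_
        rw [hc, hXdef]; exact Finset.mem_image_of_mem f (Finset.mem_univ k)
      have m2 : (Q i k).getVert 1 ∈ (Q i k').support.tail.dropLast := by
        rw [heq]
        refine hint i k' hk'i.symm ?_
        intro hc
        refine hmemX ?_
        rw [heq, hc, hXdef]; exact Finset.mem_image_of_mem f (Finset.mem_univ k')
      rcases hQdisj i k i k' hki.symm hk'i.symm _ m1 m2 with ⟨-, e⟩ | ⟨e1, e2⟩
      · exact e
      · exact absurd e1.symm hk'i
  -- hence every neighbor of f i is a second vertex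
  have hsurj : ∀ i : Fin n, ∀ w ∈ G.neighborFinset (f i), ∃ k, k ≠ i ∧ (Q i k).getVert 1 = w := by
    intro i w hw
    have hsub : (Finset.univ.erase i).image (fun k => (Q i k).getVert 1) ⊆
        G.neighborFinset (f i) := by
      intro y hy
      obtain ⟨k, hk, rfl⟩ := Finset.mem_image.mp hy
      have hki : k ≠ i := Finset.ne_of_mem_erase hk
      exact (SimpleGraph.mem_neighborFinset _ _ _).mpr (hadj i k hki.symm)
    have hcard : G.degree (f i) ≤
        ((Finset.univ.erase i).image (fun k => (Q i k).getVert 1)).card := by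
      rw [Finset.card_image_of_injOn (hinj2 i), Finset.card_erase_of_mem (Finset.mem_univ i),
        Finset.card_univ, Fintype.card_fin, hreg]
    have := Finset.eq_of_subset_of_card_le hsub (by rw [SimpleGraph.card_neighborFinset_eq_degree]; exact hcard)
    rw [← this] at hw
    obtain ⟨k, hk, hkw⟩ := Finset.mem_image.mp hw
    exact ⟨k, Finset.ne_of_mem_erase hk, hkw⟩
  -- now use the hypothesis on X
  obtain ⟨u, hu, v, hv, huv, hcard2⟩ := hX X hXcard
  obtain ⟨i, -, rfl⟩ := Finset.mem_image.mp hu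
  obtain ⟨j, -, rfl⟩ := Finset.mem_image.mp hv
  have hij : i ≠ j := fun h => huv (by rw [h])
  -- every common neighbor of f i, f j outside X equals the second vertex of Q i j
  have hkey : ∀ w ∈ (G.neighborFinset (f i) ∩ G.neighborFinset (f j)) \ X,
      w = (Q i j).getVert 1 := by
    intro w hw
    rw [Finset.mem_sdiff, Finset.mem_inter] at hw
    obtain ⟨⟨hwi, hwj⟩, hwX⟩ := hw
    obtain ⟨k, hki, hk⟩ := hsurj i w hwi
    obtain ⟨m, hmj, hm⟩ := hsurj j w hwj
    have hwfk : w ≠ f k := by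
      intro hc; refine hwX ?_
      rw [hc, hXdef]; exact Finset.mem_image_of_mem f (Finset.mem_univ k)
    have hwfm : w ≠ f m := by
      intro hc; refine hwX ?_
      rw [hc, hXdef]; exact Finset.mem_image_of_mem f (Finset.mem_univ m)
    have m1 : w ∈ (Q i k).support.tail.dropLast := hk ▸ hint i k hki.symm (hk.symm ▸ hwfk)
    have m2 : w ∈ (Q j m).support.tail.dropLast := hm ▸ hint j m hmj.symm (hm.symm ▸ hwfm)
    rcases hQdisj i k j m hki.symm hmj.symm w m1 m2 with ⟨e1, -⟩ | ⟨-, e2⟩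
    · exact absurd e1 hij
    · rw [← hk, e2]
  -- but there are two distinct such common neighbors
  obtain ⟨w1, hw1, w2, hw2, hne⟩ := Finset.one_lt_card.mp hcard2
  exact hne ((hkey w1 hw1).trans (hkey w2 hw2).symm)
end
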